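/- arXiv:2211.04237 — 3 statements merged into one kernel-verified Lean document; each statement's English description precedes it below -/
import Mathlib

section
/- Suppose b>a>0 and let (u₋, v₋) be a sub-solution and let (u₁, v₁) = (−u₀, −v₀) where (u₀,v₀) solves Δu₀ = −4πN₁/|V| + 4πΣm_jδ_{p_j}, Δv₀ = −4πN₂/|V| + 4πΣn_jδ_{q_j} on a finite connected graph. If Δu₋ ≥ λf₁(u₋+u₀, v₋+v₀) + 4πN₁/|V| and Δv₋ ≥ λf₂(u₋+u₀, v₋+v₀) + 4πN₂/|V| pointwise on V, then u₋ < u₁ and v₋ < v₁ everywhere on V. -/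
open Real

noncomputable def graphLap {V : Type*} [Fintype V] (w : V → V → ℝ) (μ : V → ℝ)
    (u : V → ℝ) (x : V) : ℝ :=
  (μ x)⁻¹ * ∑ y, w x y * (u y - u x)

def graphConnected {V : Type*} (w : V → V → ℝ) : Prop :=
  ∀ x y : V, Relation.ReflTransGen (fun a b => 0 < w a b) x y

noncomputable def dirac {V : Type*} [DecidableEq V] (μ : V → ℝ) (p x : V) : ℝ :=
  if x = p then (μ x)⁻¹ else 0

noncomputable def f₁ (a b u v : ℝ) : ℝ :=
  a * (b - a) * exp u - b * (b - a) * exp v + a ^ 2 * exp (2 * u)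
    - a * b * exp (2 * v) + b * (b - a) * exp (u + v)

noncomputable def f₂ (a b u v : ℝ) : ℝ :=
  -(b * (b - a) * exp u) + a * (b - a) * exp v - a * b * exp (2 * u)
    + a ^ 2 * exp (2 * v) + b * (b - a) * exp (u + v)

lemma key_poly (a b X Y : ℝ) (ha : 0 < a) (hab : a < b) (hX : 1 ≤ X) (hY : 0 < Y)
    (hYX : Y ≤ X)
    (hF : a*(b-a)*X - b*(b-a)*Y + a^2*X^2 - a*b*Y^2 + b*(b-a)*(X*Y) ≤ 0) : X = 1 := by
  rcases eq_or_lt_of_le hX with h | h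
  · exact h.symm
  · exfalso
    have hb : 0 < b := ha.trans hab
    have hba : 0 < b - a := sub_pos.2 hab
    have hbr : 0 < a*(b-a) + a^2*(X+1) + b*(b-a)*Y := by positivity
    rcases le_or_gt Y 1 with hY1 | hY1
    · have h1 : 0 < (X-1)*(a*(b-a) + a^2*(X+1) + b*(b-a)*Y) :=
        mul_pos (sub_pos.2 h) hbr
      have h2 : 0 ≤ a*b*((1-Y)*(1+Y)) := mul_nonneg (mul_pos ha hb).le (mul_nonneg (sub_nonneg.2 hY1) (by linarith))
      nlinarith [h1, h2]
    · have hbr2 : 0 < a*(b-a) + a^2*(X+Y) + b*(b-a)*Y := by positivity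
      have h1 : 0 ≤ (X-Y)*(a*(b-a) + a^2*(X+Y) + b*(b-a)*Y) :=
        mul_nonneg (sub_nonneg.2 hYX) hbr2.le
      have h2 : 0 < (b-a)^2*Y*(Y-1) := by
        have : 0 < Y - 1 := sub_pos.2 hY1
        positivity
      nlinarith [h1, h2]

lemma f1_eq (a b u v : ℝ) : f₁ a b u v =
    a*(b-a)*exp u - b*(b-a)*exp v + a^2*(exp u)^2 - a*b*(exp v)^2
      + b*(b-a)*(exp u * exp v) := by
  simp only [f₁, two_mul, exp_add]; ring

lemma f2_swap (a b u v : ℝ) : f₂ a b u v = f₁ a b v u := by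
  simp only [f₁, f₂, add_comm v u]; ring

lemma f1_nonneg_of_zero (a b v : ℝ) (ha : 0 < a) (hab : a < b) (hv : v ≤ 0) :
    0 ≤ f₁ a b 0 v := by
  rw [f1_eq]
  have h1 : exp v ≤ 1 := exp_le_one_iff.2 hv
  have h2 : 0 < exp v := exp_pos v
  simp only [exp_zero]
  nlinarith [mul_nonneg (mul_pos ha (ha.trans hab)).le (mul_nonneg (sub_nonneg.2 h1) (by linarith : (0:ℝ) ≤ 1 + exp v))]

lemma dirac_nonneg {V : Type*} [DecidableEq V] (μ : V → ℝ) (hμ : ∀ x, 0 < μ x)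
    (p x : V) : 0 ≤ dirac μ p x := by
  unfold dirac; split
  · exact (inv_nonneg).2 (hμ x).le
  · exact le_refl 0

lemma lap_add {V : Type*} [Fintype V] (w : V → V → ℝ) (μ : V → ℝ) (u v : V → ℝ) (x : V) :
    graphLap w μ (fun y => u y + v y) x = graphLap w μ u x + graphLap w μ v x := by
  unfold graphLap
  rw [← mul_add, ← Finset.sum_add_distrib]
  congr 1
  apply Finset.sum_congr rfl
  intros; ring

lemma lap_nonpos_at_max {V : Type*} [Fintype V] (w : V → V → ℝ) (μ : V → ℝ)
    (hwnn : ∀ x y, 0 ≤ w x y) (hμ : ∀ x, 0 < μ x) (u : V → ℝ) (x : V)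
    (hmax : ∀ y, u y ≤ u x) : graphLap w μ u x ≤ 0 := by
  unfold graphLap
  apply mul_nonpos_of_nonneg_of_nonpos ((inv_nonneg).2 (hμ x).le)
  apply Finset.sum_nonpos
  intro y _
  exact mul_nonpos_of_nonneg_of_nonpos (hwnn x y) (by linarith [hmax y])

lemma lap_zero_neighbors {V : Type*} [Fintype V] (w : V → V → ℝ) (μ : V → ℝ)
    (hwnn : ∀ x y, 0 ≤ w x y) (hμ : ∀ x, 0 < μ x) (u : V → ℝ) (x : V)
    (hmax : ∀ y, u y ≤ u x) (h0 : graphLap w μ u x = 0) (y : V) (hw : 0 < w x y) :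
    u y = u x := by
  unfold graphLap at h0
  have hμx : (μ x)⁻¹ ≠ 0 := inv_ne_zero (hμ x).ne'
  have hsum : ∑ z, w x z * (u z - u x) = 0 := by
    rcases mul_eq_zero.1 h0 with h | h
    · exact absurd h hμx
    · exact h
  have hsum' : ∑ z, w x z * (u x - u z) = 0 := by
    have : ∑ z, w x z * (u x - u z) = -∑ z, w x z * (u z - u x) := by
      rw [← Finset.sum_neg_distrib]
      apply Finset.sum_congr rfl; intros; ring
    rw [this, hsum, neg_zero]
  have := (Finset.sum_eq_zero_iff_of_nonneg (fun z _ =>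
    mul_nonneg (hwnn x z) (by linarith [hmax z]))).1 hsum' y (Finset.mem_univ y)
  have hz : u x - u y = 0 := by
    rcases mul_eq_zero.1 this with h | h
    · exact absurd h hw.ne'
    · exact h
  linarith

lemma core {V : Type*} [Fintype V] [DecidableEq V] (w : V → V → ℝ) (μ : V → ℝ)
    (hwnn : ∀ x y, 0 ≤ w x y) (hμ : ∀ x, 0 < μ x) (hconn : graphConnected w)
    (a b lam : ℝ) (ha : 0 < a) (hab : a < b) (hlam : 0 < lam)
    {k : ℕ} (p : Fin k → V) (m : Fin k → ℝ) (hm : ∀ j, 0 < m j) (j0 : Fin k)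
    (U W : V → ℝ)
    (hU : ∀ x, graphLap w μ U x ≥
      lam * f₁ a b (U x) (W x) + 4 * π * ∑ j, m j * dirac μ (p j) x)
    (x0 : V) (hmU : ∀ y, U y ≤ U x0) (hmW : ∀ y, W y ≤ U x0) (h0 : 0 ≤ U x0) :
    False := by
  have hpi := Real.pi_pos
  have hdnn : ∀ x, 0 ≤ ∑ j, m j * dirac μ (p j) x := fun x =>
    Finset.sum_nonneg fun j _ => mul_nonneg (hm j).le (dirac_nonneg μ hμ _ _)
  -- step 1 : U x0 = 0
  have hUx0 : U x0 = 0 := by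
    have hl := lap_nonpos_at_max w μ hwnn hμ U x0 hmU
    have h1 : lam * f₁ a b (U x0) (W x0) ≤ 0 := by
      nlinarith [hU x0, mul_nonneg (by positivity : (0:ℝ) ≤ 4 * π) (hdnn x0)]
    have hf : f₁ a b (U x0) (W x0) ≤ 0 := by
      by_contra hc; push_neg at hc
      nlinarith [mul_pos hlam hc]
    rw [f1_eq] at hf
    have hX : 1 ≤ exp (U x0) := by
      rw [← Real.exp_zero]; exact exp_le_exp.2 h0
    have hYX : exp (W x0) ≤ exp (U x0) := exp_le_exp.2 (hmW x0)
    have := key_poly a b (exp (U x0)) (exp (W x0)) ha hab hX (exp_pos _) hYX hf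
    exact (Real.exp_eq_one_iff _).1 this
  -- step 2 : points at level 0 have zero Laplacian and zero dirac mass
  have hzero : ∀ x, U x = 0 →
      graphLap w μ U x = 0 ∧ (∑ j, m j * dirac μ (p j) x) = 0 := by
    intro x hx
    have hmaxx : ∀ y, U y ≤ U x := by
      intro y; rw [hx, ← hUx0]; exact hmU y
    have hl := lap_nonpos_at_max w μ hwnn hμ U x hmaxx
    have hWx : W x ≤ 0 := by have := hmW x; linarith [hUx0 ▸ this]
    have hfnn : 0 ≤ f₁ a b (U x) (W x) := by
      rw [hx]; exact f1_nonneg_of_zero a b _ ha hab hWx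
    have h := hU x
    have hdx := hdnn x
    have hprod : 0 ≤ 4 * π * ∑ j, m j * dirac μ (p j) x :=
      mul_nonneg (by positivity) hdx
    constructor
    · nlinarith [mul_nonneg hlam.le hfnn]
    · have hle : (∑ j, m j * dirac μ (p j) x) ≤ 0 := by
        nlinarith [mul_nonneg hlam.le hfnn]
      linarith
  -- step 3 : propagation of the level 0 set along the graph
  have hreach : ∀ x, Relation.ReflTransGen (fun a b => 0 < w a b) x0 x → U x = 0 := by
    intro x hx
    induction hx with
    | refl => exact hUx0
    | @tail c d hseg hstep ih =>
      have hz := (hzero c ih).1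
      have hmaxc : ∀ y, U y ≤ U c := by
        intro y; rw [ih, ← hUx0]; exact hmU y
      rw [lap_zero_neighbors w μ hwnn hμ U c hmaxc hz d hstep, ih]
  -- step 4 : contradiction at the vertex p j0
  have hU0 : U (p j0) = 0 := hreach _ (hconn x0 (p j0))
  have hd0 := (hzero _ hU0).2
  have hsingle : m j0 * dirac μ (p j0) (p j0) ≤ ∑ j, m j * dirac μ (p j) (p j0) :=
    Finset.single_le_sum (f := fun j => m j * dirac μ (p j) (p j0))
      (fun j _ => mul_nonneg (hm j).le (dirac_nonneg μ hμ _ _)) (Finset.mem_univ j0)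
  have hdd : dirac μ (p j0) (p j0) = (μ (p j0))⁻¹ := by simp [dirac]
  rw [hdd] at hsingle
  have : 0 < m j0 * (μ (p j0))⁻¹ := mul_pos (hm j0) (inv_pos.2 (hμ _))
  linarith

/-- A sub-solution (u₋,v₋) of the shifted Chern-Simons system lies strictly
below (u₁,v₁) = (−u₀,−v₀). -/
theorem stmt_13 {V : Type*} [Fintype V] [Nonempty V] [DecidableEq V]
    (w : V → V → ℝ) (μ : V → ℝ)
    (hsymm : ∀ x y, w x y = w y x) (hwnn : ∀ x y, 0 ≤ w x y)
    (hμ : ∀ x, 0 < μ x) (hconn : graphConnected w)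
    (a b lam : ℝ) (ha : 0 < a) (hab : a < b) (hlam : 0 < lam)
    (k₁ k₂ : ℕ) (hk₁ : 0 < k₁) (hk₂ : 0 < k₂)
    (p : Fin k₁ → V) (q : Fin k₂ → V)
    (m : Fin k₁ → ℝ) (n : Fin k₂ → ℝ)
    (hm : ∀ j, 0 < m j) (hn : ∀ j, 0 < n j)
    (u₀ v₀ : V → ℝ)
    (hu₀ : ∀ x, graphLap w μ u₀ x =
      -(4 * π * (∑ j, m j)) / (∑ y, μ y) + 4 * π * ∑ j, m j * dirac μ (p j) x)
    (hv₀ : ∀ x, graphLap w μ v₀ x =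
      -(4 * π * (∑ j, n j)) / (∑ y, μ y) + 4 * π * ∑ j, n j * dirac μ (q j) x)
    (um vm : V → ℝ)
    (hsub₁ : ∀ x, graphLap w μ um x ≥
      lam * f₁ a b (um x + u₀ x) (vm x + v₀ x) + 4 * π * (∑ j, m j) / (∑ y, μ y))
    (hsub₂ : ∀ x, graphLap w μ vm x ≥
      lam * f₂ a b (um x + u₀ x) (vm x + v₀ x) + 4 * π * (∑ j, n j) / (∑ y, μ y)) :
    (∀ x, um x < -u₀ x) ∧ (∀ x, vm x < -v₀ x) := by
  set U : V → ℝ := fun x => um x + u₀ x with hUdef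
  set W : V → ℝ := fun x => vm x + v₀ x with hWdef
  have hU : ∀ x, graphLap w μ U x ≥
      lam * f₁ a b (U x) (W x) + 4 * π * ∑ j, m j * dirac μ (p j) x := by
    intro x
    have hl : graphLap w μ U x = graphLap w μ um x + graphLap w μ u₀ x :=
      lap_add w μ um u₀ x
    have h1 := hsub₁ x
    have h2 := hu₀ x
    rw [neg_div] at h2
    simp only [hUdef, hWdef]
    linarith
  have hW : ∀ x, graphLap w μ W x ≥
      lam * f₁ a b (W x) (U x) + 4 * π * ∑ j, n j * dirac μ (q j) x := by
    intro x
    have hl : graphLap w μ W x = graphLap w μ vm x + graphLap w μ v₀ x :=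
      lap_add w μ vm v₀ x
    have h1 := hsub₂ x
    rw [f2_swap] at h1
    have h2 := hv₀ x
    rw [neg_div] at h2
    simp only [hUdef, hWdef]
    linarith
  obtain ⟨x0, hx0⟩ := Finite.exists_max (fun x => max (U x) (W x))
  have hneg : max (U x0) (W x0) < 0 := by
    by_contra hc
    push_neg at hc
    rcases le_total (W x0) (U x0) with hcase | hcase
    · have hmx : max (U x0) (W x0) = U x0 := max_eq_left hcase
      exact core w μ hwnn hμ hconn a b lam ha hab hlam p m hm ⟨0, hk₁⟩ U W hU x0
        (fun y => le_trans (le_max_left _ _) (hmx ▸ hx0 y))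
        (fun y => le_trans (le_max_right _ _) (hmx ▸ hx0 y))
        (hmx ▸ hc)
    · have hmx : max (U x0) (W x0) = W x0 := max_eq_right hcase
      exact core w μ hwnn hμ hconn a b lam ha hab hlam q n hn ⟨0, hk₂⟩ W U hW x0
        (fun y => le_trans (le_max_right _ _) (hmx ▸ hx0 y))
        (fun y => le_trans (le_max_left _ _) (hmx ▸ hx0 y))
        (hmx ▸ hc)
  constructor
  · intro x
    have h1 : U x ≤ max (U x0) (W x0) := le_trans (le_max_left _ _) (hx0 x)
    have : um x + u₀ x < 0 := lt_of_le_of_lt h1 hneg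
    linarith
  · intro x
    have h1 : W x ≤ max (U x0) (W x0) := le_trans (le_max_right _ _) (hx0 x)
    have : vm x + v₀ x < 0 := lt_of_le_of_lt h1 hneg
    linarith
end

section
/- Let (u_λ, v_λ) be the maximal solutions of the shifted U(1)×U(1) Chern-Simons system on a finite graph, and suppose u_λ → −u₀ pointwise as λ → ∞. Then for every test function φ:V→ℝ, ∫_V λ f₁(u₀+u_λ, v₀+v_λ) φ dμ → −4π Σ_{j=1}^{k₁} m_j φ(p_j) as λ → ∞; i.e., λf₁(u₀+u_λ, v₀+v_λ) → −4πΣ m_j δ_{p_j} in the distributional sense. -/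
open Real Filter

/-- If u_λ → −u₀ pointwise, then λf₁(u₀+u_λ, v₀+v_λ) → −4πΣ m_j δ_{p_j}
in the distributional sense. -/
theorem stmt_17 {V : Type*} [Fintype V] [Nonempty V] [DecidableEq V]
    (w : V → V → ℝ) (μ : V → ℝ)
    (hsymm : ∀ x y, w x y = w y x) (hwnn : ∀ x y, 0 ≤ w x y)
    (hμ : ∀ x, 0 < μ x)
    (a b : ℝ) (ha : 0 < a) (hab : a < b)
    (k₁ : ℕ) (p : Fin k₁ → V) (m : Fin k₁ → ℝ) (hm : ∀ j, 0 < m j)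
    (u₀ v₀ : V → ℝ)
    (hu₀ : ∀ x, graphLap w μ u₀ x =
      -(4 * π * (∑ j, m j)) / (∑ y, μ y) + 4 * π * ∑ j, m j * dirac μ (p j) x)
    (U W : ℝ → V → ℝ)
    (heq : ∀ᶠ lam in atTop, ∀ x, graphLap w μ (U lam) x =
      lam * f₁ a b (u₀ x + U lam x) (v₀ x + W lam x)
        + 4 * π * (∑ j, m j) / (∑ y, μ y))
    (hconv : ∀ x, Tendsto (fun lam => U lam x) atTop (nhds (-u₀ x))) :
    ∀ φ : V → ℝ,
      Tendsto (fun lam => ∑ x, μ x *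
          (lam * f₁ a b (u₀ x + U lam x) (v₀ x + W lam x) * φ x))
        atTop (nhds (-(4 * π * ∑ j, m j * φ (p j)))) := by
  intro φ
  set C : ℝ := 4 * π * (∑ j, m j) / (∑ y, μ y) with hC
  -- the limit of the surrogate sum
  have hlim : Tendsto (fun lam => ∑ x, μ x * ((graphLap w μ (U lam) x - C) * φ x))
      atTop (nhds (∑ x, μ x * ((graphLap w μ (fun y => -u₀ y) x - C) * φ x))) := by
    apply tendsto_finset_sum
    intro x _
    apply Tendsto.const_mul
    apply Tendsto.mul_const
    apply Tendsto.sub_const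
    simp only [graphLap]
    apply Tendsto.const_mul
    apply tendsto_finset_sum
    intro y _
    exact Tendsto.const_mul _ ((hconv y).sub (hconv x))
  -- compute the limit value
  have hneg : ∀ x, graphLap w μ (fun y => -u₀ y) x = - graphLap w μ u₀ x := by
    intro x
    simp only [graphLap, ← mul_neg, ← Finset.sum_neg_distrib]
    congr 1
    apply Finset.sum_congr rfl
    intro y _
    ring
  have hval : (∑ x, μ x * ((graphLap w μ (fun y => -u₀ y) x - C) * φ x))
      = -(4 * π * ∑ j, m j * φ (p j)) := by
    have h1 : ∀ x, graphLap w μ (fun y => -u₀ y) x - C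
        = -(4 * π) * ∑ j, m j * dirac μ (p j) x := by
      intro x
      rw [hneg x, hu₀ x, hC]
      ring
    simp only [h1]
    have h2 : ∀ x : V, μ x * ((-(4 * π) * ∑ j, m j * dirac μ (p j) x) * φ x)
        = ∑ j, -(4 * π) * (m j * (μ x * dirac μ (p j) x * φ x)) := by
      intro x
      simp only [Finset.mul_sum, Finset.sum_mul]
      apply Finset.sum_congr rfl
      intro j _
      ring
    have h3 : ∀ j, (∑ x, μ x * dirac μ (p j) x * φ x) = φ (p j) := by
      intro j
      have hd : ∀ x : V, μ x * dirac μ (p j) x * φ x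
          = if x = p j then φ x else 0 := by
        intro x
        simp only [dirac]
        split_ifs with h
        · rw [mul_inv_cancel₀ (hμ x).ne', one_mul]
        · ring
      simp only [hd, Finset.sum_ite_eq', Finset.mem_univ, if_true]
    simp only [h2]
    rw [Finset.sum_comm]
    have h4 : ∀ j, (∑ x, -(4 * π) * (m j * (μ x * dirac μ (p j) x * φ x)))
        = -(4 * π) * (m j * φ (p j)) := by
      intro j
      rw [← Finset.mul_sum, ← Finset.mul_sum, h3 j]
    rw [Finset.sum_congr rfl fun j _ => h4 j, ← Finset.mul_sum, neg_mul]
  rw [hval] at hlim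
  refine hlim.congr' ?_
  filter_upwards [heq] with lam h
  apply Finset.sum_congr rfl
  intro x _
  rw [h x]
  ring_nf
end

section
/- Let G be a finite connected graph, N > 0, η = max_{x∈V} 1/μ(x), and λ ≥ 16πNη. Let ū₀ solve Δū₀ = −4πN/|V| + 4πΣ_{j=1}^N δ_{p_j}, and set c = −ln((1+√(1−16πNη/λ))/2) and u₋ = −ū₀ − c. Then Δu₋ ≥ λ e^{ū₀+u₋}(e^{ū₀+u₋} − 1) + 4πN/|V| pointwise on V, i.e., u₋ is a sub-solution of the shifted Chern-Simons equation. -/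
open Real

/-- u₋ = −ū₀ − c with c = −ln((1+√(1−16πNη/λ))/2) is a sub-solution of the
shifted Chern-Simons equation when λ ≥ 16πNη. -/
theorem stmt_18 {V : Type*} [Fintype V] [Nonempty V] [DecidableEq V]
    (w : V → V → ℝ) (μ : V → ℝ)
    (hsymm : ∀ x y, w x y = w y x) (hwnn : ∀ x y, 0 ≤ w x y)
    (hμ : ∀ x, 0 < μ x) (hconn : graphConnected w)
    (N : ℕ) (hN : 0 < N) (p : Fin N → V)
    (η : ℝ) (hη : η = ⨆ x, (μ x)⁻¹)
    (lam : ℝ) (hlam : lam ≥ 16 * π * N * η)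
    (u₀ : V → ℝ)
    (hu₀ : ∀ x, graphLap w μ u₀ x =
      -(4 * π * N) / (∑ y, μ y) + 4 * π * ∑ j, dirac μ (p j) x)
    (c : ℝ) (hc : c = -Real.log ((1 + Real.sqrt (1 - 16 * π * N * η / lam)) / 2))
    (um : V → ℝ) (hum : um = fun x => -u₀ x - c) :
    ∀ x, graphLap w μ um x ≥
      lam * exp (u₀ x + um x) * (exp (u₀ x + um x) - 1)
        + 4 * π * N / (∑ y, μ y) := by
  intro x
  -- basic positivity
  have hbdd : BddAbove (Set.range fun x : V => (μ x)⁻¹) := Set.Finite.bddAbove (Set.finite_range _)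
  have hηle : ∀ y : V, (μ y)⁻¹ ≤ η := by
    intro y; rw [hη]; exact le_ciSup hbdd y
  have hηpos : 0 < η := lt_of_lt_of_le (inv_pos.2 (hμ (Classical.arbitrary V))) (hηle _)
  have hNpos : (0:ℝ) < N := by exact_mod_cast hN
  have h16pos : 0 < 16 * π * N * η := by positivity
  have hlampos : 0 < lam := lt_of_lt_of_le h16pos hlam
  -- a := exp (-c)
  set t : ℝ := Real.sqrt (1 - 16 * π * N * η / lam) with ht
  have hfrac : 16 * π * N * η / lam ≤ 1 := (div_le_one hlampos).2 hlam
  have ht2 : t ^ 2 = 1 - 16 * π * N * η / lam := Real.sq_sqrt (by linarith)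
  have htnn : 0 ≤ t := Real.sqrt_nonneg _
  have hapos : 0 < (1 + t) / 2 := by linarith
  have hexp : Real.exp (-c) = (1 + t) / 2 := by
    rw [hc, neg_neg, Real.exp_log hapos]
  -- key algebraic identity
  have hkey : lam * ((1 + t) / 2) * ((1 + t) / 2 - 1) = -(4 * π * N * η) := by
    have : lam * ((1 + t) / 2) * ((1 + t) / 2 - 1) = lam * (t ^ 2 - 1) / 4 := by ring
    rw [this, ht2]
    field_simp
    ring
  -- u₀ x + um x = -c
  have hsum : u₀ x + um x = -c := by rw [hum]; ring
  -- Laplacian of um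
  have hlap : graphLap w μ um x = -(graphLap w μ u₀ x) := by
    simp only [graphLap, hum]
    rw [← mul_neg, ← Finset.sum_neg_distrib]
    congr 1
    exact Finset.sum_congr rfl fun y _ => by ring
  -- dirac sum bound
  have hdirac : ∑ j, dirac μ (p j) x ≤ N * η := by
    calc ∑ j : Fin N, dirac μ (p j) x ≤ ∑ j : Fin N, η := by
          apply Finset.sum_le_sum
          intro j _
          unfold dirac
          split
          · exact hηle x
          · linarith [hηpos]
      _ = N * η := by simp [mul_comm]
  rw [hlap, hu₀ x, hsum, hexp, hkey, neg_div]
  have h4 : π * ∑ j, dirac μ (p j) x ≤ π * (N * η) :=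
    mul_le_mul_of_nonneg_left hdirac Real.pi_pos.le
  linarith
end
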